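/- Let α be a type of messages with a strict partial order ≺. Define a relation Swap on List α by: Swap l l' holds iff there exist lists l₀, l₃ and concurrent elements a, b with l = l₀ ++ a :: b :: l₃ and l' = l₀ ++ b :: a :: l₃. If l₁ and l₂ are permutations of each other, each has no duplicate elements, and each respects causal order, then l₂ is reachable from l₁ under the reflexive–transitive closure of Swap. (One delivery sequence can be permuted into the other by repeatedly swapping adjacent concurrent messages.) -/

import Mathlib

/-- A list `l` respects causal order w.r.t. the causal precedence relation
`prec`: it has no duplicates, and whenever `prec a b` and both occur in `l`,
then `a` occurs before `b` in `l`. -/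
def RespectsCausalOrder {α : Type*} (prec : α → α → Prop) (l : List α) : Prop :=
  l.Nodup ∧ ∀ a b : α, prec a b → a ∈ l → b ∈ l → [a, b].Sublist l

/-- `Swap prec l l'` holds iff `l'` is obtained from `l` by swapping two
adjacent concurrent elements. -/
def Swap {α : Type*} (prec : α → α → Prop) (l l' : List α) : Prop :=
  ∃ (l₀ l₃ : List α) (a b : α), ¬ prec a b ∧ ¬ prec b a ∧
    l = l₀ ++ a :: b :: l₃ ∧ l' = l₀ ++ b :: a :: l₃

/-! Only the absence of inversions matters: no later element of either list precedes an earlier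
one. Induct on `l₂ = a :: t` and write `l₁ = u ++ a :: v`. Every `x ∈ u` comes before `a` in `l₁`
and after it in `l₂`, so `x` and `a` are concurrent, and concurrent swaps bubble `a` to the front.
The rest, `u ++ v ~ t`, still has no inversions. -/

open List Relation

theorem List.Nodup.not_pair_sublist_swap {α : Type*} {a b : α} {l : List α} (hl : l.Nodup)
    (hab : [a, b] <+ l) : ¬ [b, a] <+ l := by
  induction l with
  | nil => simp at hab
  | cons c l ih =>
    rw [nodup_cons] at hl
    rw [sublist_cons_iff] at hab ⊢
    grind

theorem RespectsCausalOrder.pairwise {α : Type*} {prec : α → α → Prop} {l : List α}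
    (h : RespectsCausalOrder prec l) : l.Pairwise fun a b => ¬ prec b a :=
  pairwise_iff_forall_sublist.2 fun hab hba =>
    h.1.not_pair_sublist_swap hab (h.2 _ _ hba (hab.subset (by simp)) (hab.subset (by simp)))

namespace Swap

variable {α : Type*} {prec : α → α → Prop}

theorem cons (c : α) {l l' : List α} (h : Swap prec l l') : Swap prec (c :: l) (c :: l') := by
  obtain ⟨l₀, l₃, a, b, hab, hba, rfl, rfl⟩ := h
  exact ⟨c :: l₀, l₃, a, b, hab, hba, rfl, rfl⟩

theorem reflTransGen_cons (c : α) {l l' : List α} (h : ReflTransGen (Swap prec) l l') :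
    ReflTransGen (Swap prec) (c :: l) (c :: l') :=
  ReflTransGen.lift (c :: ·) (fun _ _ => Swap.cons c) _ _ h

theorem reflTransGen_append_cons (a : α) (v : List α) :
    ∀ u : List α, (∀ x ∈ u, ¬ prec a x ∧ ¬ prec x a) →
      ReflTransGen (Swap prec) (u ++ a :: v) (a :: (u ++ v))
  | [], _ => .refl
  | x :: u, hu =>
    have hx := hu x mem_cons_self
    have ih := reflTransGen_append_cons a v u fun y hy => hu y (mem_cons_of_mem x hy)
    (reflTransGen_cons x ih).tail ⟨[], u ++ v, x, a, hx.2, hx.1, rfl, rfl⟩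

theorem reflTransGen_of_perm_of_pairwise :
    ∀ {l₁ l₂ : List α}, l₁ ~ l₂ → l₁.Pairwise (fun a b => ¬ prec b a) →
      l₂.Pairwise (fun a b => ¬ prec b a) → ReflTransGen (Swap prec) l₁ l₂
  | _, [], hperm, _, _ => by rw [perm_nil.1 hperm]
  | l₁, a :: t, hperm, h₁, h₂ => by
    obtain ⟨u, v, rfl⟩ := append_of_mem (hperm.mem_iff.2 mem_cons_self)
    have hconc : ∀ x ∈ u, ¬ prec a x ∧ ¬ prec x a := by
      intro x hx
      have hax : ¬ prec a x := (pairwise_append.1 h₁).2.2 x hx a mem_cons_self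
      refine ⟨hax, fun hxa => ?_⟩
      rcases mem_cons.1 (hperm.subset (mem_append_left _ hx)) with rfl | hxt
      · exact hax hxa
      · exact rel_of_pairwise_cons h₂ hxt hxa
    have hperm' : u ++ v ~ t := (perm_middle.symm.trans hperm).cons_inv
    have h₁' : (u ++ v).Pairwise (fun a b => ¬ prec b a) :=
      h₁.sublist ((sublist_cons_self a v).append_left u)
    exact (reflTransGen_append_cons a v u hconc).trans
      (reflTransGen_cons a (reflTransGen_of_perm_of_pairwise hperm' h₁' h₂.of_cons))

end Swap

theorem reflTransGen_swap_of_respectsCausalOrder_general {α : Type*}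
    (prec : α → α → Prop)
    (l₁ l₂ : List α) (hperm : l₁.Perm l₂)
    (h₁ : RespectsCausalOrder prec l₁) (h₂ : RespectsCausalOrder prec l₂) :
    Relation.ReflTransGen (Swap prec) l₁ l₂ :=
  Swap.reflTransGen_of_perm_of_pairwise hperm h₁.pairwise h₂.pairwise

/-- One causal delivery sequence can be permuted into another by repeatedly
swapping adjacent concurrent messages. -/
theorem reflTransGen_swap_of_respectsCausalOrder {α : Type*}
    (prec : α → α → Prop)
    (hirr : ∀ a : α, ¬ prec a a)
    (htrans : ∀ a b c : α, prec a b → prec b c → prec a c)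
    (l₁ l₂ : List α) (hperm : l₁.Perm l₂)
    (h₁ : RespectsCausalOrder prec l₁) (h₂ : RespectsCausalOrder prec l₂) :
    Relation.ReflTransGen (Swap prec) l₁ l₂ :=
  reflTransGen_swap_of_respectsCausalOrder_general prec l₁ l₂ hperm h₁ h₂
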